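/- arXiv:2511.02741 — 5 statements merged into one kernel-verified Lean document; each statement's English description precedes it below -/
import Mathlib

section
/- Let 1<p<∞ and let w be a weight on ℝ. Suppose there exists K>0 such that ‖w^{1/p}·M⁺f‖_{L^{p,∞}} ≤ K·‖f·w^{1/p}‖_{L^p} for every measurable function f with f·w^{1/p} ∈ L^p(ℝ). Then [w]_{A_p^{+,*}} < ∞, and moreover [w]_{A_p^{+,*}} ≤ c_p · K^p for a constant c_p depending only on p. -/
/-!
Test the weak-type inequality on `f = σ χ_S`, where `σ = w^{-1/(p-1)}` is the dual weight and
`S ⊆ (b, c)` is a set on which `σ` is bounded; write `σ(S) = ∫_S σ`. For `x ∈ (a, b)` the window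
`(x, c)` contains `(b, c)` and has length at most `c - a`, so `M⁺f ≥ σ(S)/(c - a)` on `(a, b)`;
and `σ^p w = σ`, so `‖f w^{1/p}‖_p^p = σ(S)`. On `{x ∈ (a, b) : w(x) > s}` the function
`w^{1/p} M⁺f` exceeds `s^{1/p} σ(S)/(c - a)`, and the weak-type bound yields
`s |{x ∈ (a, b) : w > s}| (c - a)^{-p} σ(S)^{p-1} ≤ K^p`. Letting `S` increase to `(b, c)`
gives `[w]_{A_p^{+,*}} ≤ K^p`. Both sides are insensitive to changing `w` on a null set, so we
may assume `w` measurable.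
-/

open MeasureTheory Set ENNReal

/-- The one-sided (right) Hardy–Littlewood maximal operator
`M⁺f(x) = sup_{h>0} (1/h) ∫_x^{x+h} |f|`. -/
noncomputable def Mplus (f : ℝ → ℝ) (x : ℝ) : ℝ≥0∞ :=
  ⨆ (h : ℝ) (_ : 0 < h),
    ENNReal.ofReal (1 / h) * ∫⁻ y in Set.Ioo x (x + h), ENNReal.ofReal |f y|

/-- The weak `L^p` quasinorm `sup_{t>0} t |{x : g(x) > t}|^{1/p}` of an
`ℝ≥0∞`-valued function. -/
noncomputable def weakNorm (p : ℝ) (g : ℝ → ℝ≥0∞) : ℝ≥0∞ :=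
  ⨆ (t : ℝ) (_ : 0 < t),
    ENNReal.ofReal t * (volume {x : ℝ | ENNReal.ofReal t < g x}) ^ (1 / p)

/-- The weak `L^1` quasinorm `sup_{t>0} t |{x : |f(x)| > t}|` of a real function. -/
noncomputable def weakL1 (f : ℝ → ℝ) : ℝ≥0∞ :=
  ⨆ (t : ℝ) (_ : 0 < t), ENNReal.ofReal t * volume {x : ℝ | t < |f x|}

/-- `[w]_{A_p^{+,*}} = sup_{a<b<c} (1/(c-a))^p ‖w χ_{(a,b)}‖_{L^{1,∞}}
(∫_b^c w^{-1/(p-1)})^{p-1}`. -/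
noncomputable def ApStarPlusConst (p : ℝ) (w : ℝ → ℝ) : ℝ≥0∞ :=
  ⨆ (a : ℝ) (b : ℝ) (c : ℝ) (_ : a < b) (_ : b < c),
    ENNReal.ofReal (1 / (c - a)) ^ p * weakL1 (Set.indicator (Set.Ioo a b) w) *
      (∫⁻ y in Set.Ioo b c, ENNReal.ofReal (w y ^ (-(1 / (p - 1))))) ^ (p - 1)

lemma exists_measurable_nonneg_ae_eq {α : Type*} [MeasurableSpace α] {μ : Measure α}
    {w : α → ℝ} (hw : AEMeasurable w μ) (hw0 : ∀ᵐ x ∂μ, 0 ≤ w x) :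
    ∃ g : α → ℝ, Measurable g ∧ (∀ x, 0 ≤ g x) ∧ w =ᵐ[μ] g := by
  refine ⟨fun x => max (hw.mk w x) 0, hw.measurable_mk.max measurable_const,
    fun x => le_max_right _ _, ?_⟩
  filter_upwards [hw.ae_eq_mk, hw0] with x hx hx0
  rw [← hx, max_eq_left hx0]

lemma iSup_setLIntegral_inter_setOf_le_natCast {α : Type*} [MeasurableSpace α] {μ : Measure α}
    [SFinite μ] (s : Set α) (F : α → ℝ) (g : α → ℝ≥0∞) :
    ⨆ n : ℕ, ∫⁻ x in s ∩ {x | F x ≤ n}, g x ∂μ = ∫⁻ x in s, g x ∂μ := by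
  simp_rw [← withDensity_apply' g]
  have hmono : Monotone fun n : ℕ => s ∩ {x | F x ≤ n} := fun m n hmn =>
    inter_subset_inter_right _ fun x (hx : F x ≤ m) => hx.trans (Nat.cast_le.mpr hmn)
  have hcover : ⋃ n : ℕ, {x | F x ≤ n} = univ :=
    iUnion_eq_univ_iff.mpr fun x => exists_nat_ge (F x)
  rw [← hmono.measure_iUnion, ← inter_iUnion, hcover, inter_univ]

/-- `‖w^{1/p} M⁺f‖_{L^{p,∞}} ≤ C ‖f w^{1/p}‖_{L^p}` for all measurable `f`. -/
def MplusWeakTypeBound (p : ℝ) (w : ℝ → ℝ) (C : ℝ≥0∞) : Prop :=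
  ∀ f : ℝ → ℝ, Measurable f → MemLp (fun x => f x * w x ^ (1 / p)) (ENNReal.ofReal p) →
    weakNorm p (fun x => ENNReal.ofReal (w x ^ (1 / p)) * Mplus f x) ≤
      C * (∫⁻ x, ENNReal.ofReal (|f x| * w x ^ (1 / p)) ^ p) ^ (1 / p)

noncomputable def dualWeight (p : ℝ) (w : ℝ → ℝ) (y : ℝ) : ℝ := w y ^ (-(1 / (p - 1)))

section

variable {p : ℝ}

lemma rpow_neg_one_div_sub_one_mul_rpow_one_div_rpow (hp : 1 < p) {x : ℝ} (hx : 0 ≤ x) :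
    (x ^ (-(1 / (p - 1))) * x ^ (1 / p)) ^ p = x ^ (-(1 / (p - 1))) := by
  have hp0 : 0 < p := by linarith
  have hp1 : 0 < p - 1 := sub_pos.mpr hp
  rcases hx.eq_or_lt with rfl | hx
  · rw [Real.zero_rpow (by simp [hp1.ne']), zero_mul, Real.zero_rpow hp0.ne']
  · rw [← Real.rpow_add hx, ← Real.rpow_mul hx.le]
    congr 1
    field_simp
    ring

lemma weakNorm_congr_ae {g₁ g₂ : ℝ → ℝ≥0∞} (h : g₁ =ᵐ[volume] g₂) :
    weakNorm p g₁ = weakNorm p g₂ := by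
  have hlevel (t : ℝ) : volume {x | ENNReal.ofReal t < g₁ x} =
      volume {x | ENNReal.ofReal t < g₂ x} :=
    measure_congr (h.mono fun x hx => by change (_ < _) = (_ < _); rw [hx])
  simp only [weakNorm, hlevel]

lemma weakL1_congr_ae {f₁ f₂ : ℝ → ℝ} (h : f₁ =ᵐ[volume] f₂) : weakL1 f₁ = weakL1 f₂ := by
  have hlevel (t : ℝ) : volume {x | t < |f₁ x|} = volume {x | t < |f₂ x|} :=
    measure_congr (h.mono fun x hx => by change (_ < _) = (_ < _); rw [hx])
  simp only [weakL1, hlevel]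

lemma ApStarPlusConst_congr_ae {w₁ w₂ : ℝ → ℝ} (h : w₁ =ᵐ[volume] w₂) :
    ApStarPlusConst p w₁ = ApStarPlusConst p w₂ := by
  have hweak (a b : ℝ) : weakL1 ((Ioo a b).indicator w₁) = weakL1 ((Ioo a b).indicator w₂) :=
    weakL1_congr_ae (h.mono fun x hx => by simp only [indicator_apply, hx])
  have hdual (b c : ℝ) : ∫⁻ y in Ioo b c, ENNReal.ofReal (w₁ y ^ (-(1 / (p - 1)))) =
      ∫⁻ y in Ioo b c, ENNReal.ofReal (w₂ y ^ (-(1 / (p - 1)))) :=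
    lintegral_congr_ae (ae_restrict_of_ae (h.mono fun x hx => by simp only [hx]))
  simp only [ApStarPlusConst, hweak, hdual]

lemma MplusWeakTypeBound.congr_ae {w₁ w₂ : ℝ → ℝ} {C : ℝ≥0∞} (H : MplusWeakTypeBound p w₁ C)
    (h : w₁ =ᵐ[volume] w₂) : MplusWeakTypeBound p w₂ C := by
  intro f hf hfw
  have hpow : ∀ᵐ x, w₁ x ^ (1 / p) = w₂ x ^ (1 / p) := h.mono fun x hx => by rw [hx]
  have hmax : (fun x => ENNReal.ofReal (w₁ x ^ (1 / p)) * Mplus f x) =ᵐ[volume]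
      fun x => ENNReal.ofReal (w₂ x ^ (1 / p)) * Mplus f x :=
    hpow.mono fun x hx => by simp only [hx]
  have hnorm : (fun x => ENNReal.ofReal (|f x| * w₁ x ^ (1 / p)) ^ p) =ᵐ[volume]
      fun x => ENNReal.ofReal (|f x| * w₂ x ^ (1 / p)) ^ p :=
    hpow.mono fun x hx => by simp only [hx]
  have hmul : (fun x => f x * w₂ x ^ (1 / p)) =ᵐ[volume] fun x => f x * w₁ x ^ (1 / p) :=
    hpow.mono fun x hx => by simp only [hx]
  rw [← weakNorm_congr_ae hmax, ← lintegral_congr_ae hnorm]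
  exact H f hf (hfw.ae_eq hmul)

lemma rpow_mul_volume_le_of_weakNorm_le (hp : 0 < p) {g : ℝ → ℝ≥0∞} {t B : ℝ≥0∞} {E : Set ℝ}
    (hE : ∀ x ∈ E, t < g x) (hg : weakNorm p g ≤ B) : t ^ p * volume E ≤ B ^ p := by
  rcases eq_or_ne t ⊤ with rfl | htop
  · simp [eq_empty_of_forall_notMem fun x hx => not_top_lt (hE x hx)]
  have hroot : t * volume E ^ (1 / p) ≤ B := by
    rcases eq_or_ne t 0 with rfl | ht0
    · simp
    rw [← ofReal_toReal htop]
    refine le_trans ?_ hg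
    refine le_iSup₂_of_le t.toReal (toReal_pos ht0 htop) ?_
    gcongr
    intro x hx
    rw [mem_ofPred_eq, ofReal_toReal htop]
    exact hE x hx
  calc t ^ p * volume E = (t * volume E ^ (1 / p)) ^ p := by
        rw [mul_rpow_of_nonneg _ _ hp.le, ← rpow_mul, one_div_mul_cancel hp.ne', rpow_one]
    _ ≤ B ^ p := rpow_le_rpow hroot hp.le

lemma ofReal_one_div_mul_setLIntegral_le_Mplus (f : ℝ → ℝ) {a b c x : ℝ} (hax : a ≤ x)
    (hxb : x ≤ b) (hxc : x < c) :
    ENNReal.ofReal (1 / (c - a)) * ∫⁻ y in Ioo b c, ENNReal.ofReal |f y| ≤ Mplus f x := by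
  have hcx : 0 < c - x := sub_pos.mpr hxc
  calc _ ≤ ENNReal.ofReal (1 / (c - x)) * ∫⁻ y in Ioo x (x + (c - x)), ENNReal.ofReal |f y| := by
        gcongr ENNReal.ofReal ?_ * ?_
        · exact one_div_le_one_div_of_le hcx (by linarith)
        · exact lintegral_mono_set fun y hy => ⟨hxb.trans_lt hy.1, by linarith [hy.2]⟩
    _ ≤ Mplus f x := le_iSup₂ (f := fun h (_ : 0 < h) =>
        ENNReal.ofReal (1 / h) * ∫⁻ y in Ioo x (x + h), ENNReal.ofReal |f y|) (c - x) hcx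

lemma weakL1_indicator_mul_rpow_le {w f : ℝ → ℝ} {a b c : ℝ} {B : ℝ≥0∞} (hp : 0 < p)
    (hw0 : ∀ x, 0 ≤ w x) (hbc : b ≤ c) (hI : ∫⁻ y in Ioo b c, ENNReal.ofReal |f y| ≠ ⊤)
    (hB : weakNorm p (fun x => ENNReal.ofReal (w x ^ (1 / p)) * Mplus f x) ≤ B) :
    weakL1 ((Ioo a b).indicator w) *
      (ENNReal.ofReal (1 / (c - a)) * ∫⁻ y in Ioo b c, ENNReal.ofReal |f y|) ^ p ≤ B ^ p := by
  set m := ENNReal.ofReal (1 / (c - a)) * ∫⁻ y in Ioo b c, ENNReal.ofReal |f y|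
  rcases eq_or_ne m 0 with hm0 | hm0
  · simp [hm0, zero_rpow_of_pos hp]
  have hmtop : m ≠ ⊤ := mul_ne_top ofReal_ne_top hI
  simp_rw [weakL1, ENNReal.iSup_mul]
  refine iSup₂_le fun s hs => ?_
  set E := {x | s < |(Ioo a b).indicator w x|}
  have hE : ∀ x ∈ E, ENNReal.ofReal s ^ (1 / p) * m <
      ENNReal.ofReal (w x ^ (1 / p)) * Mplus f x := by
    intro x hx
    have hxab : x ∈ Ioo a b := by
      by_contra hxab
      simp only [E, mem_ofPred_eq, indicator_of_notMem hxab, abs_zero] at hx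
      exact hx.not_gt hs
    rw [mem_ofPred_eq, indicator_of_mem hxab, abs_of_nonneg (hw0 x)] at hx
    calc ENNReal.ofReal s ^ (1 / p) * m < ENNReal.ofReal (w x ^ (1 / p)) * m := by
          rw [ofReal_rpow_of_nonneg hs.le (by positivity)]
          gcongr
          exact ofReal_lt_ofReal_iff'.mpr
            ⟨Real.rpow_lt_rpow hs.le hx (by positivity), Real.rpow_pos_of_pos (hs.trans hx) _⟩
      _ ≤ ENNReal.ofReal (w x ^ (1 / p)) * Mplus f x := by
          gcongr
          exact ofReal_one_div_mul_setLIntegral_le_Mplus f hxab.1.le hxab.2.le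
            (hxab.2.trans_le hbc)
  calc ENNReal.ofReal s * volume E * m ^ p = (ENNReal.ofReal s ^ (1 / p) * m) ^ p * volume E := by
        rw [mul_rpow_of_nonneg (ENNReal.ofReal s ^ (1 / p)) m hp.le, ← rpow_mul,
          one_div_mul_cancel hp.ne', rpow_one]
        ring
    _ ≤ B ^ p := rpow_mul_volume_le_of_weakNorm_le hp hE hB

lemma lintegral_indicator_dualWeight_mul_rpow_rpow {w : ℝ → ℝ} {S : Set ℝ} (hp : 1 < p)
    (hw0 : ∀ x, 0 ≤ w x) (hS : MeasurableSet S) :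
    ∫⁻ x, ENNReal.ofReal (|S.indicator (dualWeight p w) x| * w x ^ (1 / p)) ^ p =
      ∫⁻ y in S, ENNReal.ofReal (dualWeight p w y) := by
  have hp0 : 0 < p := by linarith
  rw [← lintegral_indicator hS]
  refine lintegral_congr fun x => ?_
  by_cases hx : x ∈ S
  · have hσ0 : 0 ≤ dualWeight p w x := Real.rpow_nonneg (hw0 x) _
    rw [indicator_of_mem hx, indicator_of_mem hx, abs_of_nonneg hσ0,
      ofReal_rpow_of_nonneg (mul_nonneg hσ0 (Real.rpow_nonneg (hw0 x) _)) hp0.le, dualWeight,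
      rpow_neg_one_div_sub_one_mul_rpow_one_div_rpow hp (hw0 x)]
  · simp [hx, zero_rpow_of_pos hp0]

lemma ofReal_rpow_mul_weakL1_mul_setLIntegral_dualWeight_rpow_le {w : ℝ → ℝ} {C : ℝ≥0∞} {a b c : ℝ}
    {S : Set ℝ} (hp : 1 < p) (hw : Measurable w) (hw0 : ∀ x, 0 ≤ w x)
    (H : MplusWeakTypeBound p w C) (hbc : b ≤ c) (hS : MeasurableSet S) (hSbc : S ⊆ Ioo b c)
    (hfin : ∫⁻ y in S, ENNReal.ofReal (dualWeight p w y) ≠ ⊤) :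
    ENNReal.ofReal (1 / (c - a)) ^ p * weakL1 ((Ioo a b).indicator w) *
      (∫⁻ y in S, ENNReal.ofReal (dualWeight p w y)) ^ (p - 1) ≤ C ^ p := by
  have hp0 : 0 < p := by linarith
  set T := ∫⁻ y in S, ENNReal.ofReal (dualWeight p w y)
  rcases eq_or_ne T 0 with hT0 | hT0
  · simp [hT0, zero_rpow_of_pos (sub_pos.mpr hp)]
  set f := S.indicator (dualWeight p w)
  have hσ0 (y : ℝ) : 0 ≤ dualWeight p w y := Real.rpow_nonneg (hw0 y) _
  have hf : Measurable f := by unfold f dualWeight; fun_prop (disch := exact hS)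
  have hfI : ∫⁻ y in Ioo b c, ENNReal.ofReal |f y| = T := by
    have hind : (fun y => ENNReal.ofReal |f y|) =
        S.indicator fun y => ENNReal.ofReal (dualWeight p w y) := by
      ext y
      by_cases hy : y ∈ S <;> simp [f, hy, abs_of_nonneg (hσ0 y)]
    rw [hind, setLIntegral_indicator hS, inter_eq_left.mpr hSbc]
  have hfw : ∫⁻ x, ENNReal.ofReal (|f x| * w x ^ (1 / p)) ^ p = T :=
    lintegral_indicator_dualWeight_mul_rpow_rpow hp hw0 hS
  have hmem : MemLp (fun x => f x * w x ^ (1 / p)) (ENNReal.ofReal p) := by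
    refine ⟨(hf.mul (by fun_prop)).aestronglyMeasurable, ?_⟩
    rw [eLpNorm_eq_lintegral_rpow_enorm_toReal (by simpa using hp0) ofReal_ne_top,
      toReal_ofReal hp0.le]
    simp_rw [Real.enorm_eq_ofReal_abs, abs_mul, abs_of_nonneg (Real.rpow_nonneg (hw0 _) _)]
    rw [hfw]
    exact rpow_lt_top_of_nonneg (by positivity) hfin
  have key := weakL1_indicator_mul_rpow_le (a := a) hp0 hw0 hbc (hfI ▸ hfin) (H f hf hmem)
  rw [hfI, hfw, mul_rpow_of_nonneg C _ hp0.le, ← rpow_mul, one_div_mul_cancel hp0.ne', rpow_one,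
    mul_rpow_of_nonneg _ _ hp0.le] at key
  -- `key` reads `‖w χ_{(a,b)}‖_{L^{1,∞}} (c - a)^{-p} T^p ≤ C^p T`: cancel one factor `T`.
  have hTp : T ^ p = T ^ (p - 1) * T := by
    simpa only [sub_add_cancel, rpow_one] using rpow_add (p - 1) 1 hT0 hfin
  rw [hTp] at key
  exact (ENNReal.mul_le_mul_iff_left hT0 hfin).mp (by convert key using 1; ring)

lemma ApStarPlusConst_le_rpow_of_measurable {w : ℝ → ℝ} {C : ℝ≥0∞} (hp : 1 < p)
    (hw : Measurable w) (hw0 : ∀ x, 0 ≤ w x) (H : MplusWeakTypeBound p w C) :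
    ApStarPlusConst p w ≤ C ^ p := by
  refine iSup_le fun a => iSup_le fun b => iSup_le fun c => iSup_le fun _ =>
    iSup_le fun hbc => ?_
  set S : ℕ → Set ℝ := fun n => Ioo b c ∩ {y | dualWeight p w y ≤ n}
  have hS (n : ℕ) : MeasurableSet (S n) :=
    measurableSet_Ioo.inter (measurableSet_le (by unfold dualWeight; fun_prop) measurable_const)
  have hfin (n : ℕ) : ∫⁻ y in S n, ENNReal.ofReal (dualWeight p w y) ≠ ⊤ := by
    refine ne_top_of_le_ne_top ?_
      (setLIntegral_mono measurable_const fun y (hy : y ∈ S n) => ofReal_le_ofReal hy.2)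
    rw [setLIntegral_const]
    exact mul_ne_top ofReal_ne_top
      ((measure_mono inter_subset_left).trans_lt measure_Ioo_lt_top).ne
  have hsup := map_iSup (orderIsoRpow (p - 1) (sub_pos.mpr hp))
    fun n => ∫⁻ y in S n, ENNReal.ofReal (dualWeight p w y)
  simp only [orderIsoRpow_apply, S, iSup_setLIntegral_inter_setOf_le_natCast] at hsup
  change _ * (∫⁻ y in Ioo b c, ENNReal.ofReal (dualWeight p w y)) ^ (p - 1) ≤ _
  rw [hsup, mul_iSup]
  exact iSup_le fun n => ofReal_rpow_mul_weakL1_mul_setLIntegral_dualWeight_rpow_le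
    hp hw hw0 H hbc.le (hS n) inter_subset_left (hfin n)

end

theorem stmt3 (p : ℝ) (hp : 1 < p) :
    ∃ c : ℝ, 0 < c ∧
      ∀ w : ℝ → ℝ, (∀ x, 0 ≤ w x) → LocallyIntegrable w →
        ∀ K : ℝ, 0 < K →
        (∀ f : ℝ → ℝ, Measurable f →
            MemLp (fun x => f x * w x ^ (1 / p)) (ENNReal.ofReal p) →
            weakNorm p (fun x => ENNReal.ofReal (w x ^ (1 / p)) * Mplus f x) ≤
              ENNReal.ofReal K *
                (∫⁻ x, ENNReal.ofReal (|f x| * w x ^ (1 / p)) ^ p) ^ (1 / p)) →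
        ApStarPlusConst p w < ⊤ ∧
          ApStarPlusConst p w ≤ ENNReal.ofReal (c * K ^ p) := by
  refine ⟨1, one_pos, fun w hw0 hwloc K hK H => ?_⟩
  obtain ⟨g, hg, hg0, hwg⟩ :=
    exists_measurable_nonneg_ae_eq hwloc.aestronglyMeasurable.aemeasurable (ae_of_all _ hw0)
  have hle : ApStarPlusConst p w ≤ ENNReal.ofReal (1 * K ^ p) := by
    rw [ApStarPlusConst_congr_ae hwg, one_mul, ← ofReal_rpow_of_nonneg hK.le (by linarith)]
    exact ApStarPlusConst_le_rpow_of_measurable hp hg hg0 (MplusWeakTypeBound.congr_ae H hwg)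
  exact ⟨hle.trans_lt ofReal_lt_top, hle⟩
end

section
/- Let f be a locally integrable function on ℝ, let 0<λ₁<λ₂, and set F = {z ∈ ℝ : M⁺f(z) ≤ λ₂}. Assume that for some x ∈ ℝ one has M⁺f(x) ≤ λ₁. Then for every y ≥ x, the Lebesgue measure satisfies |F ∩ (x,y)| ≥ (1 − λ₁/λ₂)·(y − x). -/
open MeasureTheory Set ENNReal

set_option maxHeartbeats 2000000 in
theorem stmt6 (f : ℝ → ℝ) (hf : LocallyIntegrable f)
    (lam₁ lam₂ : ℝ) (h₁ : 0 < lam₁) (h₁₂ : lam₁ < lam₂)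
    (F : Set ℝ) (hF : F = {z : ℝ | Mplus f z ≤ ENNReal.ofReal lam₂})
    (x : ℝ) (hx : Mplus f x ≤ ENNReal.ofReal lam₁) :
    ∀ y : ℝ, x ≤ y →
      ENNReal.ofReal ((1 - lam₁ / lam₂) * (y - x)) ≤ volume (F ∩ Set.Ioo x y) := by
  intro y hxy
  have h₂ : 0 < lam₂ := h₁.trans h₁₂
  -- integrability facts
  have hint : ∀ a b : ℝ, IntegrableOn (fun s => |f s|) (Set.Ioo a b) := fun a b =>
    ((hf.integrableOn_isCompact isCompact_Icc).mono_set Set.Ioo_subset_Icc_self).abs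
  have hii : ∀ a b : ℝ, IntervalIntegrable (fun s => |f s|) volume a b := by
    intro a b
    apply MeasureTheory.IntegrableOn.intervalIntegrable
    exact (hf.integrableOn_isCompact (isCompact_uIcc (a := a) (b := b))).abs
  -- bridge between lintegral and interval integral
  have hlin : ∀ a b : ℝ, a ≤ b →
      (∫⁻ s in Set.Ioo a b, ENNReal.ofReal |f s|) = ENNReal.ofReal (∫ s in a..b, |f s|) := by
    intro a b hab
    rw [intervalIntegral.integral_of_le hab, MeasureTheory.integral_Ioc_eq_integral_Ioo,
      MeasureTheory.ofReal_integral_eq_lintegral_ofReal (hint a b)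
        (Filter.Eventually.of_forall fun s => abs_nonneg _)]
  -- the primitive
  set g : ℝ → ℝ := fun t => ∫ s in x..t, |f s| with hgdef
  have hgc : Continuous g := intervalIntegral.continuous_primitive hii x
  have hgsub : ∀ a b : ℝ, g b - g a = ∫ s in a..b, |f s| := fun a b =>
    intervalIntegral.integral_interval_sub_left (hii x b) (hii x a)
  have hgx : g x = 0 := intervalIntegral.integral_same
  -- the bound from `hx`
  have hx' : ∀ t : ℝ, x ≤ t → g t ≤ lam₁ * (t - x) := by
    intro t ht
    rcases eq_or_lt_of_le ht with rfl | hlt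
    · simp [hgx]
    · set h : ℝ := t - x with hh
      have hpos : 0 < h := by simp [hh]; linarith
      unfold Mplus at hx
      have h1 : ENNReal.ofReal (1 / h) * (∫⁻ s in Set.Ioo x (x + h), ENNReal.ofReal |f s|)
          ≤ ENNReal.ofReal lam₁ :=
        le_trans (le_iSup₂ (f := fun (h : ℝ) (_ : 0 < h) =>
          ENNReal.ofReal (1 / h) * ∫⁻ s in Set.Ioo x (x + h), ENNReal.ofReal |f s|) h hpos) hx
      have hxh : x + h = t := by rw [hh]; ring
      rw [hxh, hlin x t ht, ← ENNReal.ofReal_mul (by positivity)] at h1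
      have h2 : 1 / h * ∫ s in x..t, |f s| ≤ lam₁ :=
        (ENNReal.ofReal_le_ofReal_iff h₁.le).mp h1
      have h3 : (∫ s in x..t, |f s|) = g t := rfl
      rw [h3] at h2
      rw [one_div] at h2
      have h4 : g t = h * (h⁻¹ * g t) := by field_simp
      calc g t = h * (h⁻¹ * g t) := h4
        _ ≤ h * lam₁ := by
            apply mul_le_mul_of_nonneg_left h2 hpos.le
        _ = lam₁ * (t - x) := by rw [hh]; ring
  -- the sun function
  set G : ℝ → ℝ := fun t => g t - lam₂ * (t - x) with hGdef
  have hGc : Continuous G := hgc.sub (continuous_const.mul (continuous_sub_right x))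
  have hGbound : ∀ t, x ≤ t → G t ≤ -(lam₂ - lam₁) * (t - x) := by
    intro t ht
    have := hx' t ht
    simp only [hGdef]
    nlinarith
  set U : Set ℝ := {z : ℝ | ∃ t, z < t ∧ G z < G t} with hUdef
  have hUopen : IsOpen U := by
    have : U = ⋃ t : ℝ, ({z | z < t} ∩ {z | G z < G t}) := by
      ext z
      simp only [hUdef, Set.mem_setOf_eq, Set.mem_iUnion, Set.mem_inter_iff]
    rw [this]
    exact isOpen_iUnion fun t =>
      (isOpen_lt continuous_id continuous_const).inter (isOpen_lt hGc continuous_const)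
  -- points outside U have small maximal function
  have hnotU : ∀ z : ℝ, z ∉ U → Mplus f z ≤ ENNReal.ofReal lam₂ := by
    intro z hz
    unfold Mplus
    refine iSup₂_le fun h hh => ?_
    rw [hlin z (z + h) (by linarith), ← ENNReal.ofReal_mul (by positivity)]
    apply ENNReal.ofReal_le_ofReal
    have hGz : ¬ G z < G (z + h) := fun hc => hz ⟨z + h, by linarith, hc⟩
    push_neg at hGz
    have h5 := hgsub z (z + h)
    have h6 : g (z + h) - g z ≤ lam₂ * h := by
      simp only [hGdef] at hGz
      nlinarith
    have h7 : (∫ s in z..(z + h), |f s|) ≤ lam₂ * h := by linarith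
    rw [one_div]
    calc h⁻¹ * ∫ s in z..(z + h), |f s| ≤ h⁻¹ * (lam₂ * h) :=
          mul_le_mul_of_nonneg_left h7 (by positivity)
      _ = lam₂ := by field_simp
  -- the per-point rising sun lemma
  have hsun : ∀ w β : ℝ, w < β → Set.Ico w β ⊆ U → β ∉ U → G w ≤ G β := by
    intro w β hwβ hIco hβU
    by_contra hc
    push_neg at hc
    set K := Set.Icc w β ∩ {t | G w ≤ G t} with hK
    have hwK : w ∈ K := ⟨⟨le_rfl, hwβ.le⟩, show G w ≤ G w from le_rfl⟩
    have hKc : IsClosed K := isClosed_Icc.inter (isClosed_le continuous_const hGc)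
    have hKb : BddAbove K := ⟨β, fun t ht => ht.1.2⟩
    have hsK : sSup K ∈ K := hKc.csSup_mem ⟨w, hwK⟩ hKb
    have hsβ : sSup K ≠ β := fun he => absurd (he ▸ hsK.2) (not_le.mpr hc)
    have hsU : sSup K ∈ U := hIco ⟨hsK.1.1, lt_of_le_of_ne hsK.1.2 hsβ⟩
    obtain ⟨t, hst, hGst⟩ := hsU
    rcases le_or_gt t β with h' | h'
    · have htK : t ∈ K := ⟨⟨hsK.1.1.trans hst.le, h'⟩, hsK.2.trans hGst.le⟩
      exact absurd (le_csSup hKb htK) (not_le.mpr hst)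
    · exact hβU ⟨t, h', (hc.trans_le hsK.2).trans hGst⟩
  -- existence of points outside U to the right
  have hA0 : ∀ z : ℝ, x ≤ z → ∃ m, z ≤ m ∧ m ∉ U := by
    intro z hz
    have hc0 : 0 < lam₂ - lam₁ := by linarith
    set T := max z (x + (-G z) / (lam₂ - lam₁) + 1) with hT
    have hzT : z ≤ T := le_max_left _ _
    have hxT : x ≤ T := hz.trans hzT
    obtain ⟨m, hmmem, hmax⟩ :=
      isCompact_Icc.exists_isMaxOn ⟨z, Set.left_mem_Icc.2 hzT⟩ hGc.continuousOn
    refine ⟨m, hmmem.1, ?_⟩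
    rintro ⟨t, hmt, hGmt⟩
    rcases le_or_gt t T with h' | h'
    · exact absurd (hmax ⟨hmmem.1.trans hmt.le, h'⟩) (not_le.mpr hGmt)
    · have h1 : G t ≤ -(lam₂ - lam₁) * (t - x) := hGbound t (hxT.trans h'.le)
      have h2 : x + (-G z) / (lam₂ - lam₁) + 1 ≤ T := le_max_right _ _
      have h5 : (lam₂ - lam₁) * ((-G z) / (lam₂ - lam₁)) = -G z := by
        rw [mul_comm, div_mul_cancel₀ _ hc0.ne']
      have h3 : G t < G z := by
        have ht1 : (-G z) / (lam₂ - lam₁) + 1 ≤ t - x := by linarith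
        have ht2 : (lam₂ - lam₁) * ((-G z) / (lam₂ - lam₁) + 1) ≤ (lam₂ - lam₁) * (t - x) :=
          mul_le_mul_of_nonneg_left ht1 hc0.le
        rw [mul_add, h5, mul_one] at ht2
        linarith
      have h6 : G z ≤ G m := hmax (Set.left_mem_Icc.2 hzT)
      exact absurd hGmt (not_lt.mpr ((h3.trans_le h6)).le)
  -- right endpoint function
  set bfun : ℝ → ℝ := fun z => sInf (Uᶜ ∩ Set.Ici z) with hbdef
  have hbfun : ∀ z : ℝ, x ≤ z → z ∈ U →
      z < bfun z ∧ bfun z ∉ U ∧ Set.Ico z (bfun z) ⊆ U ∧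
        ∀ Y', z ≤ Y' → Y' ∉ U → bfun z ≤ Y' := by
    intro z hxz hzU
    obtain ⟨m, hzm, hmU⟩ := hA0 z hxz
    have hne : (Uᶜ ∩ Set.Ici z).Nonempty := ⟨m, hmU, hzm⟩
    have hcl : IsClosed (Uᶜ ∩ Set.Ici z) := hUopen.isClosed_compl.inter isClosed_Ici
    have hbd : BddBelow (Uᶜ ∩ Set.Ici z) := ⟨z, fun t ht => ht.2⟩
    have hmem := hcl.csInf_mem hne hbd
    have hzb : z ≤ bfun z := hmem.2
    have hbU : bfun z ∉ U := hmem.1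
    have hzb' : z < bfun z := lt_of_le_of_ne hzb (fun he => hbU (he ▸ hzU))
    refine ⟨hzb', hbU, ?_, fun Y' hY1 hY2 => csInf_le hbd ⟨hY2, hY1⟩⟩
    intro w hw
    by_contra hwU
    exact absurd (csInf_le hbd ⟨hwU, hw.1⟩) (not_le.mpr hw.2)
  -- choose Y
  obtain ⟨Y, hYy, hYU, hIooyY⟩ : ∃ Y, y ≤ Y ∧ Y ∉ U ∧ Set.Ioo y Y ⊆ U := by
    by_cases hy : y ∈ U
    · obtain ⟨h1, h2, h3, _⟩ := hbfun y hxy hy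
      exact ⟨bfun y, h1.le, h2, fun w hw => h3 ⟨hw.1.le, hw.2⟩⟩
    · exact ⟨y, le_rfl, hy, by simp⟩
  have hxY : x ≤ Y := hxy.trans hYy
  -- density measure
  set ρ : Measure ℝ := volume.withDensity fun s => ENNReal.ofReal |f s| with hρdef
  have hρ : ∀ a b : ℝ, ρ (Set.Ioo a b) = ∫⁻ s in Set.Ioo a b, ENNReal.ofReal |f s| :=
    fun a b => withDensity_apply _ measurableSet_Ioo
  -- left endpoint function
  set A : ℝ → ℝ := fun β => sSup ({x} ∪ (Uᶜ ∩ Set.Ico x β)) with hAdef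
  set W : Set ℝ := U ∩ Set.Ioo x Y with hWdef
  set S : Set ℝ := bfun '' W with hSdef
  have hzprop : ∀ z ∈ W, x ≤ A (bfun z) ∧ A (bfun z) < z ∧ z < bfun z ∧ bfun z ≤ Y ∧
      bfun z ∉ U ∧ Set.Ioo (A (bfun z)) (bfun z) ⊆ U := by
    rintro z ⟨hzU, hzx, hzY⟩
    obtain ⟨h1, h2, h3, h4⟩ := hbfun z hzx.le hzU
    have hbY : bfun z ≤ Y := h4 Y hzY.le hYU
    have hSeq : ({x} ∪ (Uᶜ ∩ Set.Ico x (bfun z))) = ({x} ∪ (Uᶜ ∩ Set.Icc x z)) := by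
      ext w
      constructor
      · rintro (hw | ⟨hw1, hw2, hw3⟩)
        · exact Or.inl hw
        · refine Or.inr ⟨hw1, hw2, ?_⟩
          by_contra hzw
          push_neg at hzw
          exact hw1 (h3 ⟨hzw.le, hw3⟩)
      · rintro (hw | ⟨hw1, hw2, hw3⟩)
        · exact Or.inl hw
        · exact Or.inr ⟨hw1, hw2, lt_of_le_of_lt hw3 h1⟩
    set D := ({x} : Set ℝ) ∪ (Uᶜ ∩ Set.Icc x z) with hDdef
    have hAeq : A (bfun z) = sSup D := by rw [hAdef]; simp only []; rw [hSeq]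
    have hclosed : IsClosed D :=
      isClosed_singleton.union (hUopen.isClosed_compl.inter isClosed_Icc)
    have hDne : D.Nonempty := ⟨x, Or.inl rfl⟩
    have hub : ∀ w ∈ D, w ≤ z := by
      rintro w (hw | ⟨_, _, hw3⟩)
      · rw [Set.mem_singleton_iff] at hw; rw [hw]; exact hzx.le
      · exact hw3
    have hbdd : BddAbove D := ⟨z, hub⟩
    have hmemA : sSup D ∈ D := hclosed.csSup_mem hDne hbdd
    have hAle : sSup D ≤ z := csSup_le hDne hub
    have hAx : x ≤ sSup D := le_csSup hbdd (Or.inl rfl)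
    have hAne : sSup D ≠ z := by
      intro he
      rcases hmemA with hm | hm
      · rw [Set.mem_singleton_iff] at hm
        rw [he] at hm
        exact absurd hm.symm (ne_of_lt hzx)
      · exact (he ▸ hm.1) hzU
    have hAz : sSup D < z := lt_of_le_of_ne hAle hAne
    have hIooU : Set.Ioo (sSup D) (bfun z) ⊆ U := by
      intro w hw
      by_contra hwU
      have hwD : w ∈ D := by
        rw [← hSeq]
        exact Or.inr ⟨hwU, (hAx.trans hw.1.le), hw.2⟩
      exact absurd (le_csSup hbdd hwD) (not_le.mpr hw.1)
    rw [hAeq]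
    exact ⟨hAx, hAz, h1, hbY, h2, hIooU⟩
  have hSprop : ∀ β ∈ S, x ≤ A β ∧ A β < β ∧ β ≤ Y ∧ β ∉ U ∧
      Set.Ioo (A β) β ⊆ U ∧ (Set.Ioo (A β) β).Nonempty := by
    rintro β ⟨z, hz, rfl⟩
    obtain ⟨p1, p2, p3, p4, p5, p6⟩ := hzprop z hz
    exact ⟨p1, p2.trans p3, p4, p5, p6, ⟨z, p2, p3⟩⟩
  have hcover : W ⊆ ⋃ β ∈ S, Set.Ioo (A β) β := by
    intro z hz
    obtain ⟨p1, p2, p3, p4, p5, p6⟩ := hzprop z hz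
    exact Set.mem_biUnion ⟨z, hz, rfl⟩ ⟨p2, p3⟩
  have hdisj : S.PairwiseDisjoint fun β => Set.Ioo (A β) β := by
    have key : ∀ β ∈ S, ∀ β' ∈ S, β < β' →
        Disjoint (Set.Ioo (A β) β) (Set.Ioo (A β') β') := by
      intro β hβ β' hβ' hlt
      rw [Set.disjoint_left]
      intro w hw hw'
      exact (hSprop β hβ).2.2.2.1 ((hSprop β' hβ').2.2.2.2.1 ⟨hw'.1.trans hw.2, hlt⟩)
    intro β hβ β' hβ' hne
    rcases lt_or_gt_of_ne hne with h | h
    · exact key β hβ β' hβ' h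
    · exact (key β' hβ' β hβ h).symm
  have hScnt : S.Countable :=
    hdisj.countable_of_isOpen (fun β _ => isOpen_Ioo) (fun β hβ => (hSprop β hβ).2.2.2.2.2)
  have hcomp : ∀ β ∈ S, ENNReal.ofReal lam₂ * volume (Set.Ioo (A β) β) ≤ ρ (Set.Ioo (A β) β) := by
    intro β hβ
    obtain ⟨hAx, hAβ, hβY, hβU, hIooU, _⟩ := hSprop β hβ
    have hGle : G (A β) ≤ G β := by
      have hev : ∀ᶠ w in nhdsWithin (A β) (Set.Ioi (A β)), G w ≤ G β := by
        filter_upwards [Ioo_mem_nhdsGT_of_mem ⟨le_rfl, hAβ⟩] with w hw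
        exact hsun w β hw.2 (fun t ht => hIooU ⟨hw.1.trans_le ht.1, ht.2⟩) hβU
      exact le_of_tendsto hGc.continuousAt.continuousWithinAt hev
    have hreal : lam₂ * (β - A β) ≤ g β - g (A β) := by
      simp only [hGdef] at hGle
      nlinarith
    rw [Real.volume_Ioo, hρ, hlin (A β) β hAβ.le, ← ENNReal.ofReal_mul h₂.le]
    apply ENNReal.ofReal_le_ofReal
    have h7 : g β - g (A β) = ∫ s in (A β)..β, |f s| := hgsub (A β) β
    linarith
  have hM : ENNReal.ofReal lam₂ * volume W ≤ ENNReal.ofReal (lam₁ * (Y - x)) := by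
    calc ENNReal.ofReal lam₂ * volume W
        ≤ ENNReal.ofReal lam₂ * volume (⋃ β ∈ S, Set.Ioo (A β) β) :=
          mul_le_mul_right (measure_mono hcover) _
      _ = ENNReal.ofReal lam₂ * ∑' β : S, volume (Set.Ioo (A β) β) := by
          rw [measure_biUnion hScnt hdisj fun β hβ => measurableSet_Ioo]
      _ = ∑' β : S, ENNReal.ofReal lam₂ * volume (Set.Ioo (A ↑β) ↑β) :=
          ENNReal.tsum_mul_left.symm
      _ ≤ ∑' β : S, ρ (Set.Ioo (A ↑β) ↑β) :=
          ENNReal.tsum_le_tsum fun β => hcomp β β.2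
      _ = ρ (⋃ β ∈ S, Set.Ioo (A β) β) :=
          (measure_biUnion hScnt hdisj fun β hβ => measurableSet_Ioo).symm
      _ ≤ ρ (Set.Ioo x Y) := by
          apply measure_mono
          refine Set.iUnion₂_subset fun β hβ => ?_
          exact Set.Ioo_subset_Ioo (hSprop β hβ).1 (hSprop β hβ).2.2.1
      _ = ENNReal.ofReal (∫ s in x..Y, |f s|) := by rw [hρ, hlin x Y hxY]
      _ ≤ ENNReal.ofReal (lam₁ * (Y - x)) := ENNReal.ofReal_le_ofReal (hx' Y hxY)
  -- transfer to (x, y)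
  have hdisj2 : Disjoint (U ∩ Set.Ioo x y) (Set.Ioo y Y) := by
    rw [Set.disjoint_left]
    rintro w ⟨_, _, hw2⟩ hw'
    exact absurd hw'.1 (not_lt.mpr hw2.le)
  have hsub2 : (U ∩ Set.Ioo x y) ∪ Set.Ioo y Y ⊆ W := by
    rintro w (⟨hwU, hw1, hw2⟩ | hw)
    · exact ⟨hwU, hw1, hw2.trans_le hYy⟩
    · exact ⟨hIooyY hw, lt_of_le_of_lt hxy hw.1, hw.2⟩
  have hadd : volume (U ∩ Set.Ioo x y) + ENNReal.ofReal (Y - y) ≤ volume W := by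
    rw [← Real.volume_Ioo (a := y) (b := Y), ← measure_union hdisj2 measurableSet_Ioo]
    exact measure_mono hsub2
  have hkey : ENNReal.ofReal lam₂ * volume (U ∩ Set.Ioo x y) ≤ ENNReal.ofReal (lam₁ * (y - x)) := by
    have h8 : ENNReal.ofReal lam₂ * volume (U ∩ Set.Ioo x y) + ENNReal.ofReal (lam₂ * (Y - y))
        ≤ ENNReal.ofReal (lam₁ * (Y - x)) := by
      calc ENNReal.ofReal lam₂ * volume (U ∩ Set.Ioo x y) + ENNReal.ofReal (lam₂ * (Y - y))
          = ENNReal.ofReal lam₂ * (volume (U ∩ Set.Ioo x y) + ENNReal.ofReal (Y - y)) := by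
            rw [mul_add, ENNReal.ofReal_mul h₂.le]
        _ ≤ ENNReal.ofReal lam₂ * volume W := mul_le_mul_right hadd _
        _ ≤ _ := hM
    have h9 := ENNReal.le_sub_of_add_le_right ENNReal.ofReal_ne_top h8
    calc ENNReal.ofReal lam₂ * volume (U ∩ Set.Ioo x y)
        ≤ ENNReal.ofReal (lam₁ * (Y - x)) - ENNReal.ofReal (lam₂ * (Y - y)) := h9
      _ = ENNReal.ofReal (lam₁ * (Y - x) - lam₂ * (Y - y)) :=
          (ENNReal.ofReal_sub _ (by nlinarith)).symm
      _ ≤ ENNReal.ofReal (lam₁ * (y - x)) := ENNReal.ofReal_le_ofReal (by nlinarith)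
  have hV : volume (U ∩ Set.Ioo x y) ≤ ENNReal.ofReal (lam₁ * (y - x) / lam₂) := by
    rw [ENNReal.ofReal_div_of_pos h₂,
      ENNReal.le_div_iff_mul_le (Or.inl (ENNReal.ofReal_pos.mpr h₂).ne') (Or.inl ofReal_ne_top)]
    rw [mul_comm]
    exact hkey
  have hcov2 : Set.Ioo x y ⊆ (F ∩ Set.Ioo x y) ∪ (U ∩ Set.Ioo x y) := by
    intro z hz
    by_cases hzF : z ∈ F
    · exact Or.inl ⟨hzF, hz⟩
    · refine Or.inr ⟨?_, hz⟩
      by_contra hzU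
      exact hzF (by rw [hF]; exact hnotU z hzU)
  have h10 : ENNReal.ofReal (y - x) ≤
      volume (F ∩ Set.Ioo x y) + ENNReal.ofReal (lam₁ * (y - x) / lam₂) := by
    calc ENNReal.ofReal (y - x) = volume (Set.Ioo x y) := (Real.volume_Ioo).symm
      _ ≤ volume ((F ∩ Set.Ioo x y) ∪ (U ∩ Set.Ioo x y)) := measure_mono hcov2
      _ ≤ volume (F ∩ Set.Ioo x y) + volume (U ∩ Set.Ioo x y) := measure_union_le _ _
      _ ≤ _ := add_le_add le_rfl hV
  calc ENNReal.ofReal ((1 - lam₁ / lam₂) * (y - x))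
      = ENNReal.ofReal ((y - x) - lam₁ * (y - x) / lam₂) := by congr 1; field_simp
    _ = ENNReal.ofReal (y - x) - ENNReal.ofReal (lam₁ * (y - x) / lam₂) :=
        ENNReal.ofReal_sub _ (div_nonneg (mul_nonneg h₁.le (sub_nonneg.2 hxy)) h₂.le)
    _ ≤ volume (F ∩ Set.Ioo x y) := tsub_le_iff_right.mpr h10
end

section
/- Let 1<r<∞ and let σ be a weight on ℝ with [σ]_{A_r^{ℛ,-}} < ∞. Assume there exist a₀ ∈ ℝ, a measurable set A ⊂ ℝ, and η ∈ (0,1) such that for every z > a₀, |A ∩ (a₀,z)| > η·(z − a₀). Then there exists a constant C > 0 independent of A and of σ such that for every z > a₀, σ(a₀,z) ≤ C·([σ]_{A_r^{ℛ,-}}/η)^r · σ(A ∩ (a₀,z)). -/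
open MeasureTheory Set ENNReal

/-- The restricted one-sided constant
`[σ]_{A_r^{ℛ,-}} = sup (|E|/(c-a)) (σ(b,c)/σ(E))^{1/r}`, where the supremum runs over
all `a<b<c` and all measurable `E ⊆ (a,b)`. -/
noncomputable def ARminusConst (r : ℝ) (σ : ℝ → ℝ) : ℝ≥0∞ :=
  ⨆ (a : ℝ) (b : ℝ) (c : ℝ) (_ : a < b) (_ : b < c)
    (E : Set ℝ) (_ : MeasurableSet E) (_ : E ⊆ Set.Ioo a b),
    volume E * ENNReal.ofReal (1 / (c - a)) *
      ((∫⁻ y in Set.Ioo b c, ENNReal.ofReal (σ y)) /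
        ∫⁻ y in E, ENNReal.ofReal (σ y)) ^ (1 / r)

lemma term_le_ARminusConst (r : ℝ) (σ : ℝ → ℝ) {a b c : ℝ} (hab : a < b) (hbc : b < c)
    {E : Set ℝ} (hE : MeasurableSet E) (hsub : E ⊆ Set.Ioo a b) :
    volume E * ENNReal.ofReal (1 / (c - a)) *
      ((∫⁻ y in Set.Ioo b c, ENNReal.ofReal (σ y)) /
        ∫⁻ y in E, ENNReal.ofReal (σ y)) ^ (1 / r) ≤ ARminusConst r σ := by
  rw [ARminusConst]
  exact le_iSup_of_le a (le_iSup_of_le b (le_iSup_of_le c (le_iSup_of_le hab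
    (le_iSup_of_le hbc (le_iSup_of_le E (le_iSup_of_le hE (le_iSup_of_le hsub le_rfl)))))))

theorem stmt7 (r : ℝ) (hr : 1 < r) :
    ∃ C : ℝ, 0 < C ∧
      ∀ σ : ℝ → ℝ, (∀ x, 0 ≤ σ x) → LocallyIntegrable σ →
        ARminusConst r σ < ⊤ →
        ∀ a₀ : ℝ, ∀ A : Set ℝ, MeasurableSet A → ∀ η : ℝ, 0 < η → η < 1 →
          (∀ z : ℝ, a₀ < z →
            ENNReal.ofReal (η * (z - a₀)) < volume (A ∩ Set.Ioo a₀ z)) →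
          ∀ z : ℝ, a₀ < z →
            (∫⁻ y in Set.Ioo a₀ z, ENNReal.ofReal (σ y)) ≤
              ENNReal.ofReal C * (ARminusConst r σ / ENNReal.ofReal η) ^ r *
                ∫⁻ y in A ∩ Set.Ioo a₀ z, ENNReal.ofReal (σ y) := by
  refine ⟨(8:ℝ) ^ r, Real.rpow_pos_of_pos (by norm_num) r, ?_⟩
  intro σ hσ0 hσint hQtop a₀ A hA η hη0 hη1 hdens z hz
  have hr0 : (0:ℝ) < r := lt_trans one_pos hr
  have hrne : r ≠ 0 := ne_of_gt hr0
  set Q := ARminusConst r σ with hQdef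
  set L : ℝ := z - a₀ with hLdef
  have hL0 : 0 < L := sub_pos.mpr hz
  -- the density measure
  set ν : Measure ℝ := volume.withDensity (fun y => ENNReal.ofReal (σ y)) with hνdef
  have hνapp : ∀ s : Set ℝ, MeasurableSet s →
      ν s = ∫⁻ y in s, ENNReal.ofReal (σ y) := fun s hs => withDensity_apply _ hs
  have hνIcc : ν (Icc a₀ z) < ⊤ := by
    rw [hνapp _ measurableSet_Icc]
    exact (hσint.integrableOn_isCompact isCompact_Icc).lintegral_lt_top
  -- the dyadic points
  set b : ℕ → ℝ := fun k => a₀ + L / 2 ^ k with hbdef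
  have hbgt : ∀ k, a₀ < b k := fun k => lt_add_of_pos_right _ (div_pos hL0 (pow_pos two_pos k))
  have hbsub : ∀ k, b k - a₀ = L / 2 ^ k := fun k => by simp [hbdef]
  have hbsucc : ∀ k, b (k + 1) < b k := by
    intro k
    have : L / 2 ^ (k+1) < L / 2 ^ k := by
      apply div_lt_div_of_pos_left hL0 (pow_pos two_pos k)
      exact pow_lt_pow_right₀ one_lt_two (Nat.lt_succ_self k)
    simpa [hbdef] using this
  have hb0 : b 0 = z := by simp [hbdef, hLdef]
  have hble : ∀ k, b k ≤ z := by
    intro k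
    rw [← hb0]
    have : L / 2 ^ k ≤ L / 2 ^ 0 := by
      apply div_le_div_of_nonneg_left hL0.le (pow_pos two_pos 0)
      exact one_le_pow₀ one_le_two
    simpa [hbdef] using this
  -- the density function φr
  set φr : ℝ → ℝ := fun u => (volume (A ∩ Ioo a₀ u)).toReal with hφdef
  have hφfin : ∀ u, volume (A ∩ Ioo a₀ u) < ⊤ := by
    intro u
    exact lt_of_le_of_lt (measure_mono inter_subset_right)
      (by rw [Real.volume_Ioo]; exact ofReal_lt_top)
  have hφmono : Monotone φr := by
    intro x y hxy
    exact ENNReal.toReal_mono (hφfin y).ne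
      (measure_mono (inter_subset_inter_right _ (Ioo_subset_Ioo_right hxy)))
  have hφkey : ∀ p q : ℝ, p ≤ q → φr q - φr p ≤ q - p := by
    intro p q hpq
    have hsub : A ∩ Ioo a₀ q ⊆ (A ∩ Ioo a₀ p) ∪ Icc p q := by
      rintro t ⟨ht, h1, h2⟩
      rcases lt_or_ge t p with h | h
      · exact Or.inl ⟨ht, h1, h⟩
      · exact Or.inr ⟨h, h2.le⟩
    have h1 : volume (A ∩ Ioo a₀ q) ≤ volume (A ∩ Ioo a₀ p) + ENNReal.ofReal (q - p) := by
      calc volume (A ∩ Ioo a₀ q) ≤ volume ((A ∩ Ioo a₀ p) ∪ Icc p q) := measure_mono hsub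
        _ ≤ volume (A ∩ Ioo a₀ p) + volume (Icc p q) := measure_union_le _ _
        _ = volume (A ∩ Ioo a₀ p) + ENNReal.ofReal (q - p) := by rw [Real.volume_Icc]
    have h2 := ENNReal.toReal_mono
      (ENNReal.add_ne_top.mpr ⟨(hφfin p).ne, ofReal_ne_top⟩) h1
    rw [ENNReal.toReal_add (hφfin p).ne ofReal_ne_top,
      ENNReal.toReal_ofReal (sub_nonneg.mpr hpq)] at h2
    have : φr q ≤ φr p + (q - p) := h2
    linarith
  have hφcont : Continuous φr := by
    refine (LipschitzWith.of_dist_le_mul (K := 1) fun x y => ?_).continuous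
    rw [NNReal.coe_one, one_mul, Real.dist_eq, Real.dist_eq]
    rw [abs_sub_le_iff]
    constructor
    · rcases le_total x y with h | h
      · have h1 := sub_nonpos.mpr (hφmono h)
        have h2 := abs_nonneg (x - y)
        linarith
      · have h1 := hφkey y x h
        have h2 := le_abs_self (x - y)
        linarith
    · rcases le_total y x with h | h
      · have h1 := sub_nonpos.mpr (hφmono h)
        have h2 := abs_nonneg (x - y)
        linarith
      · have h1 := hφkey x y h
        have h2 : y - x ≤ |x - y| := by rw [abs_sub_comm]; exact le_abs_self _
        linarith
  have hφ0 : φr a₀ = 0 := by simp [hφdef]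
  have hdens' : ∀ w, a₀ < w → η * (w - a₀) < φr w := by
    intro w hw
    have h := hdens w hw
    have := ENNReal.toReal_strict_mono (hφfin w).ne h
    rwa [ENNReal.toReal_ofReal (mul_nonneg hη0.le (sub_nonneg.mpr hw.le))] at this
  -- choice of the points u k
  have hex : ∀ k : ℕ, ∃ v ∈ Ioo a₀ (b k), φr v = η * L / 2 ^ (k + 1) := by
    intro k
    have h1 : η * L / 2 ^ (k+1) ∈ Ioo (φr a₀) (φr (b k)) := by
      constructor
      · rw [hφ0]
        exact div_pos (mul_pos hη0 hL0) (pow_pos two_pos _)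
      · calc η * L / 2 ^ (k+1) < η * L / 2 ^ k := by
              apply div_lt_div_of_pos_left (mul_pos hη0 hL0) (pow_pos two_pos k)
              exact pow_lt_pow_right₀ one_lt_two (Nat.lt_succ_self k)
          _ = η * (b k - a₀) := by rw [hbsub k]; ring
          _ < φr (b k) := hdens' _ (hbgt k)
    obtain ⟨v, hv1, hv2⟩ := intermediate_value_Ioo (le_of_lt (hbgt k)) hφcont.continuousOn h1
    exact ⟨v, hv1, hv2⟩
  choose u hu1 hu2 using hex
  have husucc : ∀ k, u (k + 1) < u k := by
    intro k
    by_contra h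
    push_neg at h
    have h1 := hφmono h
    rw [hu2, hu2] at h1
    have h2 : η * L / 2 ^ (k + 1 + 1) < η * L / 2 ^ (k + 1) := by
      apply div_lt_div_of_pos_left (mul_pos hη0 hL0) (pow_pos two_pos _)
      exact pow_lt_pow_right₀ one_lt_two (Nat.lt_succ_self _)
    exact absurd h1 (not_le.mpr h2)
  have huanti : StrictAnti u := strictAnti_nat_of_succ_lt husucc
  -- the sets E k
  set E : ℕ → Set ℝ := fun k => A ∩ Ioo (u (k + 1)) (u k) with hEdef
  have hEmeas : ∀ k, MeasurableSet (E k) := fun k => hA.inter measurableSet_Ioo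
  have hvolval : ∀ k, volume (A ∩ Ioo a₀ (u k)) = ENNReal.ofReal (η * L / 2 ^ (k+1)) := by
    intro k
    calc volume (A ∩ Ioo a₀ (u k)) = ENNReal.ofReal (φr (u k)) :=
          (ENNReal.ofReal_toReal (hφfin _).ne).symm
      _ = _ := by rw [hu2 k]
  have hvolIoc : ∀ v : ℝ, volume (A ∩ Ioc a₀ v) = volume (A ∩ Ioo a₀ v) := by
    intro v
    apply le_antisymm
    · calc volume (A ∩ Ioc a₀ v) ≤ volume ((A ∩ Ioo a₀ v) ∪ {v}) := by
            apply measure_mono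
            rintro t ⟨ht, h1, h2⟩
            rcases eq_or_lt_of_le h2 with h | h
            · exact Or.inr (by simp [h])
            · exact Or.inl ⟨ht, h1, h⟩
        _ ≤ volume (A ∩ Ioo a₀ v) + volume {v} := measure_union_le _ _
        _ = volume (A ∩ Ioo a₀ v) := by rw [Real.volume_singleton, add_zero]
    · exact measure_mono (inter_subset_inter_right _ Ioo_subset_Ioc_self)
  have hEvol : ∀ k, volume (E k) = ENNReal.ofReal (η * L / 2 ^ (k + 2)) := by
    intro k
    have hsplit : Ioo a₀ (u k) = Ioc a₀ (u (k+1)) ∪ Ioo (u (k+1)) (u k) :=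
      (Ioc_union_Ioo_eq_Ioo (hu1 (k+1)).1.le (husucc k)).symm
    have hdisjoint : Disjoint (A ∩ Ioc a₀ (u (k+1))) (A ∩ Ioo (u (k+1)) (u k)) :=
      Set.disjoint_left.mpr fun x hx1 hx2 => absurd hx1.2.2 (not_le.mpr hx2.2.1)
    have h1 : volume (A ∩ Ioo a₀ (u k)) =
        volume (A ∩ Ioc a₀ (u (k+1))) + volume (E k) := by
      rw [hsplit, inter_union_distrib_left]
      exact measure_union hdisjoint (hEmeas k)
    rw [hvolIoc, hvolval, hvolval] at h1
    have harith : η * L / 2 ^ (k+1) = η * L / 2 ^ (k+1+1) + η * L / 2 ^ (k+1+1) := by ring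
    rw [harith, ENNReal.ofReal_add
      (le_of_lt (div_pos (mul_pos hη0 hL0) (pow_pos two_pos _)))
      (le_of_lt (div_pos (mul_pos hη0 hL0) (pow_pos two_pos _)))] at h1
    exact ((ENNReal.add_right_inj ofReal_ne_top).mp h1).symm
  have hEsub : ∀ k, E k ⊆ Ioo a₀ (b k) := by
    intro k x hx
    exact ⟨lt_trans (hu1 (k+1)).1 hx.2.1, lt_trans hx.2.2 (hu1 k).2⟩
  -- the key estimate
  set M : ℝ≥0∞ := (8 * (Q / ENNReal.ofReal η)) ^ r with hMdef
  have hMne : M ≠ ⊤ := by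
    apply (ENNReal.rpow_lt_top_of_nonneg hr0.le _).ne
    exact (ENNReal.mul_ne_top (by norm_num)
      (ENNReal.div_lt_top hQtop.ne (ENNReal.ofReal_pos.mpr hη0).ne').ne)
  have key : ∀ k : ℕ, ν (Ioc (b (k + 1)) (b k)) ≤ M * ν (E (k + 1)) := by
    intro k
    set X := ∫⁻ y in Ioo (b (k+1)) (b k), ENNReal.ofReal (σ y) with hXdef
    set Y := ∫⁻ y in E (k+1), ENNReal.ofReal (σ y) with hYdef
    have hterm := term_le_ARminusConst r σ (hbgt (k+1)) (hbsucc k)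
      (hEmeas (k+1)) (hEsub (k+1))
    rw [hEvol (k+1)] at hterm
    have hcoef : ENNReal.ofReal (η * L / 2 ^ (k+1+2)) *
        ENNReal.ofReal (1 / (b k - a₀)) = ENNReal.ofReal (η / 8) := by
      rw [← ENNReal.ofReal_mul
        (le_of_lt (div_pos (mul_pos hη0 hL0) (pow_pos two_pos _)))]
      congr 1
      rw [hbsub k]
      have h2k : (2:ℝ) ^ k ≠ 0 := pow_ne_zero k two_ne_zero
      field_simp
      ring
    rw [hcoef] at hterm
    have h3 : ENNReal.ofReal η * (X / Y) ^ (1/r) ≤ 8 * Q := by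
      have h8η : ENNReal.ofReal η = 8 * ENNReal.ofReal (η / 8) := by
        rw [show (8:ℝ≥0∞) = ENNReal.ofReal 8 by norm_num,
          ← ENNReal.ofReal_mul (by norm_num)]
        congr 1
        ring
      rw [h8η, mul_assoc]
      exact mul_le_mul_right hterm 8
    have h4 : (X / Y) ^ (1/r) ≤ 8 * Q / ENNReal.ofReal η := by
      rw [ENNReal.le_div_iff_mul_le (Or.inl (ENNReal.ofReal_pos.mpr hη0).ne')
        (Or.inl ofReal_ne_top), mul_comm]
      exact h3
    have h5 : X / Y ≤ M := by
      have h := ENNReal.rpow_le_rpow h4 hr0.le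
      rwa [← ENNReal.rpow_mul, one_div, inv_mul_cancel₀ hrne, ENNReal.rpow_one,
        mul_div_assoc] at h
    have hY : Y ≠ ⊤ := by
      rw [hYdef, ← hνapp _ (hEmeas (k+1))]
      refine (lt_of_le_of_lt (measure_mono ?_) hνIcc).ne
      intro x hx
      exact ⟨((hEsub (k+1)) hx).1.le, le_trans ((hEsub (k+1)) hx).2.le (hble (k+1))⟩
    have h6 : X ≤ M * Y := (ENNReal.div_le_iff_le_mul (Or.inr hMne) (Or.inl hY)).mp h5
    rw [hνapp _ measurableSet_Ioc, hνapp _ (hEmeas (k+1)), ← hYdef]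
    calc (∫⁻ y in Ioc (b (k+1)) (b k), ENNReal.ofReal (σ y)) = X := by
          rw [hXdef, ← restrict_Ioo_eq_restrict_Ioc]
      _ ≤ M * Y := h6
  -- covering
  have hcover : Ioo a₀ z ⊆ ⋃ k, Ioc (b (k + 1)) (b k) := by
    intro x hx
    have hxa : 0 < (x - a₀) / L := div_pos (sub_pos.mpr hx.1) hL0
    obtain ⟨n, hn⟩ := exists_pow_lt_of_lt_one hxa (by norm_num : (1:ℝ)/2 < 1)
    have hbn : b n < x := by
      rw [lt_div_iff₀ hL0] at hn
      have heq : L / 2 ^ n = (1/2:ℝ) ^ n * L := by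
        rw [div_pow, one_pow]; ring
      have : L / 2 ^ n < x - a₀ := by rw [heq]; exact hn
      simp only [hbdef]
      linarith
    have hexn : ∃ n, b n < x := ⟨n, hbn⟩
    have hfind : b (Nat.find hexn) < x := Nat.find_spec hexn
    have hm0 : Nat.find hexn ≠ 0 := by
      intro h
      rw [h, hb0] at hfind
      exact absurd hfind (not_lt.mpr hx.2.le)
    obtain ⟨j, hj⟩ := Nat.exists_eq_succ_of_ne_zero hm0
    have hxle : x ≤ b j := le_of_not_gt (Nat.find_min hexn (by omega))
    exact mem_iUnion.mpr ⟨j, (by rw [← Nat.succ_eq_add_one, ← hj]; exact hfind), hxle⟩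
  -- disjointness
  have hdisj : Pairwise (Function.onFun Disjoint fun k => E (k + 1)) := by
    intro i j hij
    wlog hlt : i < j generalizing i j
    · exact (this hij.symm ((hij.lt_or_gt).resolve_left hlt)).symm
    have hle : u (j + 1) ≤ u (i + 2) := huanti.antitone (by omega)
    refine Set.disjoint_left.mpr fun x hx1 hx2 => ?_
    exact absurd (lt_of_le_of_lt (le_trans (le_of_lt hx2.2.2) hle) hx1.2.1) (lt_irrefl x)
  -- conclusion
  have hEu : (⋃ k, E (k + 1)) ⊆ A ∩ Ioo a₀ z := by
    rintro x ⟨s, ⟨k, rfl⟩, hx⟩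
    refine ⟨hx.1, lt_trans (hu1 (k+2)).1 hx.2.1, ?_⟩
    exact lt_trans hx.2.2 (lt_of_lt_of_le (hu1 (k+1)).2 (hble (k+1)))
  have h8 : M = ENNReal.ofReal ((8:ℝ) ^ r) * (Q / ENNReal.ofReal η) ^ r := by
    rw [hMdef, ENNReal.mul_rpow_of_nonneg _ _ hr0.le,
      show (8:ℝ≥0∞) = ENNReal.ofReal 8 by norm_num,
      ENNReal.ofReal_rpow_of_pos (by norm_num : (0:ℝ) < 8)]
  calc (∫⁻ y in Set.Ioo a₀ z, ENNReal.ofReal (σ y)) = ν (Ioo a₀ z) :=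
        (hνapp _ measurableSet_Ioo).symm
    _ ≤ ν (⋃ k, Ioc (b (k + 1)) (b k)) := measure_mono hcover
    _ ≤ ∑' k, ν (Ioc (b (k + 1)) (b k)) := measure_iUnion_le _
    _ ≤ ∑' k, M * ν (E (k + 1)) := ENNReal.tsum_le_tsum key
    _ = M * ∑' k, ν (E (k + 1)) := ENNReal.tsum_mul_left
    _ = M * ν (⋃ k, E (k + 1)) := by
        rw [measure_iUnion hdisj fun k => hEmeas (k + 1)]
    _ ≤ M * ν (A ∩ Ioo a₀ z) := mul_le_mul_right (measure_mono hEu) _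
    _ = ENNReal.ofReal ((8:ℝ) ^ r) * (Q / ENNReal.ofReal η) ^ r *
          ∫⁻ y in A ∩ Set.Ioo a₀ z, ENNReal.ofReal (σ y) := by
        rw [hνapp _ (hA.inter measurableSet_Ioo), h8]
end

section
/- Let 1<p<∞ and let w be a weight on ℝ with [w]_{A_p^{+,*}} < ∞. Then for every s>1, with s' = s/(s-1), the weight w^{1/s} satisfies [w^{1/s}]_{A_p^+} ≤ 2^p · s' · [w]_{A_p^{+,*}}^{1/s}. -/
open MeasureTheory Set ENNReal

/-- The one-sided Muckenhoupt constant
`[v]_{A_p^+} = sup_{a<b<c} ((1/(c-a))∫_a^b v) ((1/(c-a))∫_b^c v^{-1/(p-1)})^{p-1}`. -/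
noncomputable def ApPlusConst (p : ℝ) (v : ℝ → ℝ) : ℝ≥0∞ :=
  ⨆ (a : ℝ) (b : ℝ) (c : ℝ) (_ : a < b) (_ : b < c),
    (ENNReal.ofReal (1 / (c - a)) * ∫⁻ y in Set.Ioo a b, ENNReal.ofReal (v y)) *
      (ENNReal.ofReal (1 / (c - a)) *
        ∫⁻ y in Set.Ioo b c, ENNReal.ofReal (v y ^ (-(1 / (p - 1))))) ^ (p - 1)

/-!
Fix `a < b < c` and write `X = 1/(c-a)`, `N = ‖w χ_{(a,b)}‖_{L^{1,∞}}`, `J = ∫_b^c w^{-1/(p-1)}`.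
Kolmogorov's inequality (layer cake, with the distribution function of `w χ_{(a,b)}` at height
`t^s` bounded by `min(c - a, N t^{-s})`) gives `X ∫_a^b w^{1/s} ≤ s' (X N)^{1/s}`, and Hölder's
inequality with exponents `s, s'` gives `X ∫_b^c (w^{1/s})^{-1/(p-1)} ≤ (X J)^{1/s}`. In both the
factor `(c-a)^{1-1/s}` is absorbed by `X`, and multiplying yields `s' (X^p N J^{p-1})^{1/s}`.
-/

lemma le_weakL1 (f : ℝ → ℝ) {t : ℝ} (ht : 0 < t) :
    ENNReal.ofReal t * volume {x | t < |f x|} ≤ weakL1 f :=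
  le_iSup₂ (f := fun (t : ℝ) (_ : 0 < t) => ENNReal.ofReal t * volume {x | t < |f x|}) t ht

lemma volume_lt_le_weakL1_mul_inv {f : ℝ → ℝ} (hf : ∀ x, 0 ≤ f x) {t : ℝ} (ht : 0 < t) :
    volume {x | t < f x} ≤ weakL1 f * ENNReal.ofReal t⁻¹ := by
  have h := le_weakL1 f ht
  simp only [abs_of_nonneg (hf _)] at h
  rw [ENNReal.ofReal_inv_of_pos ht, ← div_eq_mul_inv,
    ENNReal.le_div_iff_mul_le (by simp [ht]) (by simp), mul_comm]
  exact h

lemma lintegral_Ioi_ofReal_rpow_neg {s t₀ : ℝ} (hs : 1 < s) (ht₀ : 0 < t₀) :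
    ∫⁻ t in Ioi t₀, ENNReal.ofReal (t ^ (-s)) = ENNReal.ofReal (t₀ ^ (1 - s) / (s - 1)) := by
  rw [← ofReal_integral_eq_lintegral_ofReal (integrableOn_Ioi_rpow_of_lt (by linarith) ht₀),
    integral_Ioi_rpow_of_lt (by linarith) ht₀]
  · congr 1
    rw [show -s + 1 = 1 - s by ring, neg_div, ← div_neg, neg_sub]
  · filter_upwards [self_mem_ae_restrict measurableSet_Ioi] with t ht
    exact Real.rpow_nonneg (ht₀.trans ht).le _

lemma mul_add_mul_rpow_eq {s L N t₀ : ℝ} (hs : 1 < s) (hL : 0 < L) (ht₀ : 0 < t₀)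
    (hN : N = L * t₀ ^ s) :
    L * t₀ + N * (t₀ ^ (1 - s) / (s - 1)) = s / (s - 1) * (L ^ (1 - 1 / s) * N ^ (1 / s)) := by
  have hs0 : s ≠ 0 := by positivity
  have hN' : N * t₀ ^ (1 - s) = L * t₀ := by
    rw [hN, mul_assoc, ← Real.rpow_add ht₀, add_sub_cancel, Real.rpow_one]
  have hLt : L ^ (1 - 1 / s) * N ^ (1 / s) = L * t₀ := by
    rw [hN, Real.mul_rpow hL.le (by positivity), ← Real.rpow_mul ht₀.le, mul_one_div_cancel hs0,
      Real.rpow_one, ← mul_assoc, ← Real.rpow_add hL, sub_add_cancel, Real.rpow_one]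
  rw [hLt, ← mul_div_assoc, hN']
  have : s - 1 ≠ 0 := by linarith
  field_simp
  ring

lemma setLIntegral_Ioi_le_of_le_min {g : ℝ → ℝ≥0∞} {s L : ℝ} {N : ℝ≥0∞} (hs : 1 < s)
    (hL : 0 < L) (hgL : ∀ t > 0, g t ≤ ENNReal.ofReal L)
    (hgN : ∀ t > 0, g t ≤ N * ENNReal.ofReal (t ^ (-s))) :
    ∫⁻ t in Ioi 0, g t ≤
      ENNReal.ofReal (s / (s - 1)) * ENNReal.ofReal L ^ (1 - 1 / s) * N ^ (1 / s) := by
  have hs1 : 0 < s - 1 := by linarith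
  rcases eq_or_ne N ⊤ with rfl | hNtop
  · have : ENNReal.ofReal (s / (s - 1)) * ENNReal.ofReal L ^ (1 - 1 / s) ≠ 0 :=
      mul_ne_zero (ENNReal.ofReal_pos.2 (by positivity)).ne' (by simp [hL])
    rw [top_rpow_of_pos (by positivity), mul_top this]
    exact le_top
  rcases eq_or_ne N 0 with rfl | hN0
  · calc ∫⁻ t in Ioi 0, g t ≤ ∫⁻ t in Ioi 0, 0 * ENNReal.ofReal (t ^ (-s)) :=
          setLIntegral_mono' measurableSet_Ioi hgN
      _ = 0 := by simp
      _ ≤ _ := zero_le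
  have hNr : 0 < N.toReal := ENNReal.toReal_pos hN0 hNtop
  -- `t₀` is where the two bounds on `g` cross.
  set t₀ := (N.toReal / L) ^ (1 / s)
  have ht₀ : 0 < t₀ := by positivity
  have hN : N.toReal = L * t₀ ^ s := by
    rw [← Real.rpow_mul (by positivity), one_div_mul_cancel (by positivity), Real.rpow_one,
      mul_div_cancel₀ _ hL.ne']
  calc ∫⁻ t in Ioi 0, g t = (∫⁻ t in Ioc 0 t₀, g t) + ∫⁻ t in Ioi t₀, g t := by
        rw [← Ioc_union_Ioi_eq_Ioi ht₀.le,
          lintegral_union measurableSet_Ioi (Ioc_disjoint_Ioi le_rfl)]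
    _ ≤ (∫⁻ _ in Ioc 0 t₀, ENNReal.ofReal L) + ∫⁻ t in Ioi t₀, N * ENNReal.ofReal (t ^ (-s)) :=
        add_le_add (setLIntegral_mono' measurableSet_Ioc fun t ht => hgL t ht.1)
          (setLIntegral_mono' measurableSet_Ioi fun t ht => hgN t (ht₀.trans ht))
    _ = ENNReal.ofReal (L * t₀ + N.toReal * (t₀ ^ (1 - s) / (s - 1))) := by
        rw [setLIntegral_const, lintegral_const_mul' _ _ hNtop,
          lintegral_Ioi_ofReal_rpow_neg hs ht₀,
          Real.volume_Ioc, sub_zero, ENNReal.ofReal_add (by positivity) (by positivity),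
          ENNReal.ofReal_mul hL.le, ENNReal.ofReal_mul hNr.le, ENNReal.ofReal_toReal hNtop]
    _ = ENNReal.ofReal (s / (s - 1) * (L ^ (1 - 1 / s) * N.toReal ^ (1 / s))) := by
        rw [mul_add_mul_rpow_eq hs hL ht₀ hN]
    _ = _ := by
        rw [ENNReal.ofReal_mul (by positivity), ENNReal.ofReal_mul (by positivity),
          ← ENNReal.ofReal_rpow_of_pos hL, ← ENNReal.ofReal_rpow_of_pos hNr,
          ENNReal.ofReal_toReal hNtop, mul_assoc]

lemma lintegral_rpow_le_mul_weakL1_rpow {f : ℝ → ℝ} (hf : ∀ x, 0 ≤ f x) (hfm : AEMeasurable f)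
    {L : ℝ} (hL : 0 < L) (hsupp : volume (Function.support f) ≤ ENNReal.ofReal L)
    {s : ℝ} (hs : 1 < s) :
    ∫⁻ x, ENNReal.ofReal (f x ^ (1 / s)) ≤
      ENNReal.ofReal (s / (s - 1)) * ENNReal.ofReal L ^ (1 - 1 / s) * weakL1 f ^ (1 / s) := by
  have hs0 : 0 < s := by linarith
  have hlevel : ∀ t > 0, {x | t < f x ^ (1 / s)} = {x | t ^ s < f x} := fun t ht => by
    ext x
    simpa only [one_div, mem_ofPred_eq] using Real.lt_rpow_inv_iff_of_pos ht.le (hf x) hs0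
  rw [lintegral_eq_lintegral_meas_lt volume (ae_of_all _ fun x => Real.rpow_nonneg (hf x) _)
    (hfm.pow_const _)]
  refine setLIntegral_Ioi_le_of_le_min hs hL (fun t ht => ?_) (fun t ht => ?_)
  · rw [hlevel t ht]
    exact (measure_mono fun x hx => (lt_trans (by positivity) hx).ne').trans hsupp
  · rw [hlevel t ht, Real.rpow_neg ht.le]
    exact volume_lt_le_weakL1_mul_inv hf (by positivity)

lemma lintegral_rpow_one_div_le {α : Type*} [MeasurableSpace α] (μ : Measure α)
    {g : α → ℝ≥0∞} (hg : AEMeasurable g μ) {s : ℝ} (hs : 1 < s) :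
    ∫⁻ x, g x ^ (1 / s) ∂μ ≤ (∫⁻ x, g x ∂μ) ^ (1 / s) * μ univ ^ (1 - 1 / s) := by
  have hs0 : s ≠ 0 := by positivity
  have h := ENNReal.lintegral_mul_le_Lp_mul_Lq μ (Real.HolderConjugate.conjExponent hs)
    (hg.pow_const (1 / s)) aemeasurable_const (g := fun _ => 1)
  simp only [Pi.mul_apply, mul_one, ENNReal.one_rpow, lintegral_one] at h
  simp_rw [← ENNReal.rpow_mul, one_div_mul_cancel hs0, ENNReal.rpow_one] at h
  rwa [Real.conjExponent, one_div_div, sub_div, div_self hs0] at h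

lemma ofReal_one_div_mul_rpow_one_sub {L : ℝ} (hL : 0 < L) (r : ℝ) :
    ENNReal.ofReal (1 / L) * ENNReal.ofReal L ^ (1 - r) = ENNReal.ofReal (1 / L) ^ r := by
  rw [ENNReal.ofReal_rpow_of_pos hL, ENNReal.ofReal_rpow_of_pos (by positivity),
    ← ENNReal.ofReal_mul (by positivity), Real.rpow_sub hL, Real.rpow_one,
    Real.div_rpow zero_le_one hL.le, Real.one_rpow]
  congr 1
  field_simp

lemma ofReal_one_div_mul_setLIntegral_rpow_le {w : ℝ → ℝ} (hw : ∀ x, 0 ≤ w x)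
    (hwm : AEMeasurable w) {a b c s : ℝ} (hac : a < c) (hbc : b ≤ c) (hs : 1 < s) :
    ENNReal.ofReal (1 / (c - a)) * ∫⁻ y in Ioo a b, ENNReal.ofReal (w y ^ (1 / s)) ≤
      ENNReal.ofReal (s / (s - 1)) *
        (ENNReal.ofReal (1 / (c - a)) * weakL1 ((Ioo a b).indicator w)) ^ (1 / s) := by
  have hindicator : ∫⁻ y in Ioo a b, ENNReal.ofReal (w y ^ (1 / s)) =
      ∫⁻ y, ENNReal.ofReal ((Ioo a b).indicator w y ^ (1 / s)) := by
    rw [← lintegral_indicator measurableSet_Ioo]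
    congr 1 with y
    by_cases hy : y ∈ Ioo a b <;> simp [hy, Real.zero_rpow (by positivity : s⁻¹ ≠ 0)]
  have hsupp : volume (Function.support ((Ioo a b).indicator w)) ≤ ENNReal.ofReal (c - a) :=
    (measure_mono (support_indicator_subset.trans (Ioo_subset_Ioo_right hbc))).trans
      Real.volume_Ioo.le
  calc _ ≤ ENNReal.ofReal (1 / (c - a)) * (ENNReal.ofReal (s / (s - 1)) *
        ENNReal.ofReal (c - a) ^ (1 - 1 / s) * weakL1 ((Ioo a b).indicator w) ^ (1 / s)) := by
        rw [hindicator]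
        gcongr
        exact lintegral_rpow_le_mul_weakL1_rpow (fun x => indicator_nonneg (fun y _ => hw y) x)
          (hwm.indicator measurableSet_Ioo) (sub_pos.2 hac) hsupp hs
    _ = _ := by
        rw [mul_rpow_of_nonneg _ _ (by positivity),
          ← ofReal_one_div_mul_rpow_one_sub (sub_pos.2 hac)]
        ring

lemma ofReal_one_div_mul_setLIntegral_rpow_rpow_le {w : ℝ → ℝ} (hw : ∀ x, 0 ≤ w x)
    (hwm : AEMeasurable w) {a b c s : ℝ} (hab : a ≤ b) (hac : a < c) (hs : 1 < s) (q : ℝ) :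
    ENNReal.ofReal (1 / (c - a)) * ∫⁻ y in Ioo b c, ENNReal.ofReal ((w y ^ (1 / s)) ^ q) ≤
      (ENNReal.ofReal (1 / (c - a)) * ∫⁻ y in Ioo b c, ENNReal.ofReal (w y ^ q)) ^ (1 / s) := by
  have hs0 : 0 ≤ 1 / s := by positivity
  have hs1 : 0 ≤ 1 - 1 / s := sub_nonneg.2 ((div_le_one (by linarith)).2 hs.le)
  have hpow : ∀ y, ENNReal.ofReal ((w y ^ (1 / s)) ^ q) = ENNReal.ofReal (w y ^ q) ^ (1 / s) :=
    fun y => by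
      rw [← Real.rpow_mul (hw y), mul_comm, Real.rpow_mul (hw y),
        ENNReal.ofReal_rpow_of_nonneg (Real.rpow_nonneg (hw y) _) hs0]
  have hholder := lintegral_rpow_one_div_le (volume.restrict (Ioo b c))
    (hwm.restrict.pow_const q).ennreal_ofReal hs
  rw [Measure.restrict_apply_univ, Real.volume_Ioo] at hholder
  calc _ ≤ ENNReal.ofReal (1 / (c - a)) * ((∫⁻ y in Ioo b c, ENNReal.ofReal (w y ^ q)) ^ (1 / s) *
        ENNReal.ofReal (c - a) ^ (1 - 1 / s)) := by
        simp_rw [hpow]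
        gcongr
        exact hholder.trans (by gcongr)
    _ = _ := by
        rw [mul_rpow_of_nonneg _ _ hs0, ← ofReal_one_div_mul_rpow_one_sub (sub_pos.2 hac)]
        ring

lemma mul_rpow_mul_mul_rpow_rpow (X N J : ℝ≥0∞) {p r : ℝ} (hp : 1 ≤ p) (hr : 0 ≤ r) :
    (X * N) ^ r * ((X * J) ^ r) ^ (p - 1) = (X ^ p * N * J ^ (p - 1)) ^ r := by
  have hXp : X ^ p = X * X ^ (p - 1) := by
    conv_lhs => rw [← add_sub_cancel 1 p]
    rw [ENNReal.rpow_add_of_nonneg _ _ zero_le_one (by linarith), ENNReal.rpow_one]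
  rw [← ENNReal.rpow_mul, mul_comm r, ENNReal.rpow_mul, ← mul_rpow_of_nonneg _ _ hr,
    mul_rpow_of_nonneg _ _ (by linarith : 0 ≤ p - 1), hXp]
  congr 1
  ac_rfl

theorem stmt9_general (p : ℝ) (hp : 1 < p) (w : ℝ → ℝ) (hw : ∀ x, 0 ≤ w x)
    (hwloc : LocallyIntegrable w) (s : ℝ) (hs : 1 < s) :
    ApPlusConst p (fun x => w x ^ (1 / s)) ≤
      ENNReal.ofReal (2 ^ p * (s / (s - 1))) * (ApStarPlusConst p w) ^ (1 / s) := by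
  have hwm : AEMeasurable w := hwloc.aestronglyMeasurable.aemeasurable
  simp only [ApPlusConst, iSup_le_iff]
  intro a b c hab hbc
  set X := ENNReal.ofReal (1 / (c - a))
  set N := weakL1 ((Ioo a b).indicator w)
  set J := ∫⁻ y in Ioo b c, ENNReal.ofReal (w y ^ (-(1 / (p - 1))))
  have hstar : X ^ p * N * J ^ (p - 1) ≤ ApStarPlusConst p w :=
    le_iSup_of_le a <| le_iSup_of_le b <| le_iSup_of_le c <| le_iSup_of_le hab <|
      le_iSup_of_le hbc le_rfl
  calc _ ≤ ENNReal.ofReal (s / (s - 1)) * (X * N) ^ (1 / s) * ((X * J) ^ (1 / s)) ^ (p - 1) := by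
        refine mul_le_mul' ?_ (ENNReal.rpow_le_rpow ?_ (by linarith))
        · exact ofReal_one_div_mul_setLIntegral_rpow_le hw hwm (hab.trans hbc) hbc.le hs
        · exact ofReal_one_div_mul_setLIntegral_rpow_rpow_le hw hwm hab.le (hab.trans hbc) hs _
    _ = ENNReal.ofReal (s / (s - 1)) * (X ^ p * N * J ^ (p - 1)) ^ (1 / s) := by
        rw [mul_assoc, mul_rpow_mul_mul_rpow_rpow X N J hp.le (by positivity)]
    _ ≤ _ := by
        gcongr
        exact le_mul_of_one_le_left (by positivity) (Real.one_le_rpow one_le_two (by linarith))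

theorem stmt9 (p : ℝ) (hp : 1 < p) (w : ℝ → ℝ) (hw : ∀ x, 0 ≤ w x)
    (hwloc : LocallyIntegrable w) (hwA : ApStarPlusConst p w < ⊤)
    (s : ℝ) (hs : 1 < s) :
    ApPlusConst p (fun x => w x ^ (1 / s)) ≤
      ENNReal.ofReal (2 ^ p * (s / (s - 1))) * (ApStarPlusConst p w) ^ (1 / s) :=
  stmt9_general p hp w hw hwloc s hs
end

section
/- Let 1<p<∞ and let w be a weight on ℝ. Define the middle-point constant [w]_{Ã_p^{+,*}} = sup over all a<c, with b = (a+c)/2, of (1/(c-a))^p · ‖w·χ_{(a,b)}‖_{L^{1,∞}} · (∫_b^c w^{-1/(p-1)})^{p-1}. Then [w]_{Ã_p^{+,*}} ≤ [w]_{A_p^{+,*}} ≤ 2^p · [w]_{Ã_p^{+,*}}. -/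
open MeasureTheory Set ENNReal

/-- The middle-point variant `[w]_{Ã_p^{+,*}}`, where only `b = (a+c)/2` is allowed. -/
noncomputable def ApStarPlusMidConst (p : ℝ) (w : ℝ → ℝ) : ℝ≥0∞ :=
  ⨆ (a : ℝ) (c : ℝ) (_ : a < c),
    ENNReal.ofReal (1 / (c - a)) ^ p *
      weakL1 (Set.indicator (Set.Ioo a ((a + c) / 2)) w) *
      (∫⁻ y in Set.Ioo ((a + c) / 2) c, ENNReal.ofReal (w y ^ (-(1 / (p - 1))))) ^ (p - 1)

lemma weakL1_mono {f g : ℝ → ℝ} (h : ∀ x, |f x| ≤ |g x|) : weakL1 f ≤ weakL1 g := by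
  refine iSup_mono fun t => iSup_mono fun _ => ?_
  exact mul_le_mul_right (measure_mono fun x hx => lt_of_lt_of_le hx (h x)) _

lemma key (p : ℝ) (hp : 1 < p) (w : ℝ → ℝ) (hw : ∀ x, 0 ≤ w x)
    {a b c a' c' : ℝ} (hab : a < b) (hbc : b < c) (ha' : a' ≤ a) (hc' : c ≤ c')
    (hmid : (a' + c') / 2 = b) (hlen : c' - a' ≤ 2 * (c - a)) :
    ENNReal.ofReal (1 / (c - a)) ^ p * weakL1 (Set.indicator (Set.Ioo a b) w) *
        (∫⁻ y in Set.Ioo b c, ENNReal.ofReal (w y ^ (-(1 / (p - 1))))) ^ (p - 1) ≤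
      ENNReal.ofReal (2 ^ p) *
        (ENNReal.ofReal (1 / (c' - a')) ^ p *
          weakL1 (Set.indicator (Set.Ioo a' ((a' + c') / 2)) w) *
          (∫⁻ y in Set.Ioo ((a' + c') / 2) c',
            ENNReal.ofReal (w y ^ (-(1 / (p - 1))))) ^ (p - 1)) := by
  rw [hmid]
  have hca : (0:ℝ) < c - a := by linarith
  have hca' : (0:ℝ) < c' - a' := by linarith
  have h1 : ENNReal.ofReal (1 / (c - a)) ^ p ≤
      ENNReal.ofReal (2 ^ p) * ENNReal.ofReal (1 / (c' - a')) ^ p := by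
    have hr : 1 / (c - a) ≤ 2 * (1 / (c' - a')) := by
      rw [mul_one_div, div_le_div_iff₀ hca hca']
      linarith
    calc ENNReal.ofReal (1 / (c - a)) ^ p
        ≤ ENNReal.ofReal (2 * (1 / (c' - a'))) ^ p :=
          ENNReal.rpow_le_rpow (ENNReal.ofReal_le_ofReal hr) (by linarith)
      _ = (ENNReal.ofReal 2 * ENNReal.ofReal (1 / (c' - a'))) ^ p := by
          rw [ENNReal.ofReal_mul (by norm_num)]
      _ = ENNReal.ofReal 2 ^ p * ENNReal.ofReal (1 / (c' - a')) ^ p := by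
          rw [ENNReal.mul_rpow_of_nonneg _ _ (by linarith)]
      _ = ENNReal.ofReal (2 ^ p) * ENNReal.ofReal (1 / (c' - a')) ^ p := by
          rw [← ENNReal.ofReal_rpow_of_pos (by norm_num)]
  have h2 : weakL1 (Set.indicator (Set.Ioo a b) w) ≤
      weakL1 (Set.indicator (Set.Ioo a' b) w) := by
    refine weakL1_mono fun x => ?_
    by_cases hx : x ∈ Set.Ioo a b
    · rw [Set.indicator_of_mem hx, Set.indicator_of_mem (Set.mem_Ioo.mpr ⟨ha'.trans_lt hx.1, hx.2⟩)]
    · rw [Set.indicator_of_notMem hx]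
      simp [abs_nonneg]
  have h3 : (∫⁻ y in Set.Ioo b c, ENNReal.ofReal (w y ^ (-(1 / (p - 1))))) ^ (p - 1) ≤
      (∫⁻ y in Set.Ioo b c', ENNReal.ofReal (w y ^ (-(1 / (p - 1))))) ^ (p - 1) :=
    ENNReal.rpow_le_rpow (lintegral_mono_set (Set.Ioo_subset_Ioo le_rfl hc')) (by linarith)
  calc ENNReal.ofReal (1 / (c - a)) ^ p * weakL1 (Set.indicator (Set.Ioo a b) w) *
        (∫⁻ y in Set.Ioo b c, ENNReal.ofReal (w y ^ (-(1 / (p - 1))))) ^ (p - 1)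
      ≤ (ENNReal.ofReal (2 ^ p) * ENNReal.ofReal (1 / (c' - a')) ^ p) *
          weakL1 (Set.indicator (Set.Ioo a' b) w) *
          (∫⁻ y in Set.Ioo b c', ENNReal.ofReal (w y ^ (-(1 / (p - 1))))) ^ (p - 1) :=
        mul_le_mul' (mul_le_mul' h1 h2) h3
    _ = ENNReal.ofReal (2 ^ p) *
          (ENNReal.ofReal (1 / (c' - a')) ^ p * weakL1 (Set.indicator (Set.Ioo a' b) w) *
            (∫⁻ y in Set.Ioo b c', ENNReal.ofReal (w y ^ (-(1 / (p - 1))))) ^ (p - 1)) := by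
        ring

theorem stmt13 (p : ℝ) (hp : 1 < p) (w : ℝ → ℝ) (hw : ∀ x, 0 ≤ w x)
    (hwloc : LocallyIntegrable w) :
    ApStarPlusMidConst p w ≤ ApStarPlusConst p w ∧
      ApStarPlusConst p w ≤ ENNReal.ofReal (2 ^ p) * ApStarPlusMidConst p w := by
  constructor
  · refine iSup_le fun a => iSup_le fun c => iSup_le fun hac => ?_
    have h1 : a < (a + c) / 2 := by linarith
    have h2 : (a + c) / 2 < c := by linarith
    exact le_iSup_of_le a (le_iSup_of_le ((a + c) / 2) (le_iSup_of_le c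
      (le_iSup_of_le h1 (le_iSup_of_le h2 le_rfl))))
  · refine iSup_le fun a => iSup_le fun b => iSup_le fun c =>
      iSup_le fun hab => iSup_le fun hbc => ?_
    by_cases hcase : c - b ≤ b - a
    · have hkey := key p hp w hw hab hbc (a' := a) (c' := 2 * b - a) le_rfl
        (by linarith) (by ring) (by linarith)
      refine hkey.trans (mul_le_mul_right ?_ _)
      exact le_iSup_of_le a (le_iSup_of_le (2 * b - a) (le_iSup_of_le (by linarith) le_rfl))
    · have hkey := key p hp w hw hab hbc (a' := 2 * b - c) (c' := c)
        (by linarith) le_rfl (by ring) (by linarith)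
      refine hkey.trans (mul_le_mul_right ?_ _)
      exact le_iSup_of_le (2 * b - c) (le_iSup_of_le c (le_iSup_of_le (by linarith) le_rfl))
end
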